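/- arXiv:2307.14618 — 3 statements merged into one kernel-verified Lean document; each statement's English description precedes it below -/
import Mathlib

section
/- Let n ≥ 2 be an integer and let T ∈ (0, ∞]. Let f : (0,T) → ℝ be continuous with f(ρ) > 0 for all ρ, let η : (0,T) → ℝ be differentiable with η'(ρ) = f(ρ)² for all ρ ∈ (0,T) and with η(ρ) → 0 as ρ → 0⁺, and let u : (0,T) → ℝ be differentiable with u(ρ) > 0 and u'(ρ) ≤ − f(ρ)² u(ρ)² / (n−1) for all ρ ∈ (0,T). Then for every ρ ∈ (0,T) one has η(ρ) > 0 and u(ρ) ≤ (n−1)/η(ρ). -/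
open Filter

/-- One-dimensional Riccati comparison underlying the substatic Laplacian
Comparison Theorem (distance from a point): along a unit-speed `g̃`-geodesic,
with `u = H/f` positive and satisfying the Riccati inequality, and with the
reparametrized distance `η` solving `η' = f²` and `η → 0` at the base point,
one gets `0 < η` and `u ≤ (n-1)/η` on `(0, T)`. -/
theorem riccati_comparison_from_point
    (n : ℕ) (hn : 2 ≤ n) (T : EReal) (hT : 0 < T)
    (f η u : ℝ → ℝ)
    (hf_cont : ContinuousOn f {ρ : ℝ | 0 < ρ ∧ (ρ : EReal) < T})
    (hf_pos : ∀ ρ : ℝ, 0 < ρ → (ρ : EReal) < T → 0 < f ρ)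
    (hη_deriv : ∀ ρ : ℝ, 0 < ρ → (ρ : EReal) < T → HasDerivAt η ((f ρ) ^ 2) ρ)
    (hη_lim : Tendsto η (nhdsWithin 0 (Set.Ioi 0)) (nhds 0))
    (hu_pos : ∀ ρ : ℝ, 0 < ρ → (ρ : EReal) < T → 0 < u ρ)
    (hu_diff : ∀ ρ : ℝ, 0 < ρ → (ρ : EReal) < T → DifferentiableAt ℝ u ρ)
    (hu_deriv : ∀ ρ : ℝ, 0 < ρ → (ρ : EReal) < T →
      deriv u ρ ≤ -(f ρ) ^ 2 * (u ρ) ^ 2 / ((n : ℝ) - 1)) :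
    ∀ ρ : ℝ, 0 < ρ → (ρ : EReal) < T → 0 < η ρ ∧ u ρ ≤ ((n : ℝ) - 1) / η ρ := by
  intro ρ hρ0 hρT
  have hc : (1 : ℝ) ≤ (n : ℝ) - 1 := by
    have : (2 : ℝ) ≤ (n : ℝ) := by exact_mod_cast hn
    linarith
  have hcpos : (0 : ℝ) < (n : ℝ) - 1 := by linarith
  -- points below ρ are in the domain
  have hmem : ∀ x : ℝ, 0 < x → x ≤ ρ → (x : EReal) < T := fun x _ hx =>
    lt_of_le_of_lt (EReal.coe_le_coe_iff.mpr hx) hρT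
  -- η is strictly increasing on (0, ρ]
  have hηmono : ∀ s t : ℝ, 0 < s → s < t → t ≤ ρ → η s < η t := by
    intro s t hs hst htρ
    have hst' : StrictMonoOn η (Set.Icc s t) := by
      apply strictMonoOn_of_deriv_pos (convex_Icc s t)
      · intro x hx
        exact ((hη_deriv x (lt_of_lt_of_le hs hx.1)
          (hmem x (lt_of_lt_of_le hs hx.1) (le_trans hx.2 htρ))).differentiableAt).continuousAt.continuousWithinAt
      · intro x hx
        rw [interior_Icc] at hx
        have hx0 : 0 < x := lt_trans hs hx.1
        have hxT := hmem x hx0 (le_trans (le_of_lt hx.2) htρ)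
        rw [(hη_deriv x hx0 hxT).deriv]
        exact pow_pos (hf_pos x hx0 hxT) 2
    exact hst' (Set.left_mem_Icc.mpr (le_of_lt hst)) (Set.right_mem_Icc.mpr (le_of_lt hst)) hst
  -- η ρ > 0
  have hη_half_lt : η (ρ/2) < η ρ := hηmono (ρ/2) ρ (by linarith) (by linarith) le_rfl
  have hη_half_nonneg : 0 ≤ η (ρ/2) := by
    have hev : ∀ᶠ s in nhdsWithin (0:ℝ) (Set.Ioi 0), η s ≤ η (ρ/2) := by
      filter_upwards [self_mem_nhdsWithin,
        Ioo_mem_nhdsGT_of_mem (Set.mem_Ico.mpr ⟨le_rfl, half_pos hρ0⟩)] with s hs1 hs2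
      exact le_of_lt (hηmono s (ρ/2) hs1 hs2.2 (by linarith))
    exact le_of_tendsto hη_lim hev
  have hηρ : 0 < η ρ := lt_of_le_of_lt hη_half_nonneg hη_half_lt
  -- the function w = (n-1)/u - η is monotone on (0, ρ]
  set w : ℝ → ℝ := fun x => ((n : ℝ) - 1) * (u x)⁻¹ - η x with hw
  have hwmono : ∀ s : ℝ, 0 < s → s ≤ ρ → w s ≤ w ρ := by
    intro s hs hsρ
    rcases eq_or_lt_of_le hsρ with rfl | hsρ
    · exact le_rfl
    have hmon : MonotoneOn w (Set.Icc s ρ) := by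
      apply monotoneOn_of_deriv_nonneg (convex_Icc s ρ)
      · intro x hx
        have hx0 : 0 < x := lt_of_lt_of_le hs hx.1
        have hxT := hmem x hx0 hx.2
        have hune : u x ≠ 0 := ne_of_gt (hu_pos x hx0 hxT)
        exact (((((hu_diff x hx0 hxT).inv hune).const_mul _).sub
          (hη_deriv x hx0 hxT).differentiableAt).continuousAt).continuousWithinAt
      · intro x hx
        rw [interior_Icc] at hx
        have hx0 : 0 < x := lt_trans hs hx.1
        have hxT := hmem x hx0 (le_of_lt hx.2)
        have hune : u x ≠ 0 := ne_of_gt (hu_pos x hx0 hxT)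
        exact (((((hu_diff x hx0 hxT).hasDerivAt.inv hune).const_mul _).sub
          (hη_deriv x hx0 hxT)).differentiableAt).differentiableWithinAt
      · intro x hx
        rw [interior_Icc] at hx
        have hx0 : 0 < x := lt_trans hs hx.1
        have hxT := hmem x hx0 (le_of_lt hx.2)
        have hupos := hu_pos x hx0 hxT
        have hune : u x ≠ 0 := ne_of_gt hupos
        have hder : HasDerivAt w
            (((n : ℝ) - 1) * (-(deriv u x) / (u x) ^ 2) - (f x) ^ 2) x :=
          (((hu_diff x hx0 hxT).hasDerivAt.inv hune).const_mul _).sub (hη_deriv x hx0 hxT)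
        rw [hder.deriv]
        have hbound := hu_deriv x hx0 hxT
        have hu2 : 0 < (u x) ^ 2 := by positivity
        rw [le_div_iff₀ hcpos] at hbound
        rw [sub_nonneg, mul_comm ((n : ℝ) - 1), div_mul_eq_mul_div, le_div_iff₀ hu2]
        nlinarith [sq_nonneg (f x)]
    exact hmon (Set.left_mem_Icc.mpr (le_of_lt hsρ)) (Set.right_mem_Icc.mpr (le_of_lt hsρ)) (le_of_lt hsρ)
  -- η ρ ≤ (n-1)/u ρ
  have hkey : η ρ ≤ ((n : ℝ) - 1) * (u ρ)⁻¹ := by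
    by_contra hcon
    push_neg at hcon
    set ε := η ρ - ((n : ℝ) - 1) * (u ρ)⁻¹ with hε
    have hεpos : 0 < ε := by simp only [hε]; linarith
    have hev : ∀ᶠ s in nhdsWithin (0:ℝ) (Set.Ioi 0), η s < ε ∧ 0 < s ∧ s < ρ := by
      have h1 := hη_lim (Metric.ball_mem_nhds (0:ℝ) hεpos)
      filter_upwards [h1, self_mem_nhdsWithin,
        Ioo_mem_nhdsGT_of_mem (Set.mem_Ico.mpr ⟨le_rfl, hρ0⟩)] with s hs1 hs2 hs3
      refine ⟨?_, hs2, hs3.2⟩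
      have : |η s - 0| < ε := by simpa [Real.dist_eq] using hs1
      have := abs_lt.mp this
      linarith [this.2]
    obtain ⟨s, hsε, hs0, hsρ⟩ := hev.exists
    have hws := hwmono s hs0 (le_of_lt hsρ)
    have hsT := hmem s hs0 (le_of_lt hsρ)
    have hus : 0 < ((n : ℝ) - 1) * (u s)⁻¹ := by
      have := hu_pos s hs0 hsT
      positivity
    simp only [hw] at hws
    simp only [hε] at hεpos hsε
    linarith
  -- conclude
  refine ⟨hηρ, ?_⟩
  have hupos := hu_pos ρ hρ0 hρT
  rw [le_div_iff₀ hηρ]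
  have : η ρ * u ρ ≤ ((n : ℝ) - 1) := by
    calc η ρ * u ρ ≤ (((n : ℝ) - 1) * (u ρ)⁻¹) * u ρ := by
          exact mul_le_mul_of_nonneg_right hkey (le_of_lt hupos)
      _ = (n : ℝ) - 1 := by field_simp
  linarith [this]
end

section
/- Let n ≥ 2 be an integer and let T ∈ (0, ∞]. Let f : [0,T) → ℝ be continuous with f(ρ) > 0 for all ρ, and let u : [0,T) → ℝ be differentiable with u(0) < 0 and u'(ρ) ≤ − f(ρ)² u(ρ)² / (n−1) for all ρ ∈ [0,T). Then for every ρ ∈ [0,T): u(ρ) ≤ u(0) < 0; the quantity η(ρ) := (n−1)/u(0) + ∫₀^ρ f(t)² dt satisfies η(ρ) ≤ (n−1)/u(ρ) < 0; and in particular ∫₀^ρ f(t)² dt < (n−1)/(−u(0)). -/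
open Filter intervalIntegral

/-- One-dimensional content of Proposition 2.6(ii) of the paper: if the
initial mean-curvature ratio `u = H/f` is negative, then it stays `≤ u 0 < 0`,
the reparametrized distance `η(ρ) = (n-1)/u(0) + ∫₀^ρ f²` satisfies
`η ≤ (n-1)/u < 0`, and in particular `∫₀^ρ f² < (n-1)/(-u 0)`. -/
theorem riccati_comparison_negative_initial_data
    (n : ℕ) (hn : 2 ≤ n) (T : EReal) (hT : 0 < T)
    (f u : ℝ → ℝ)
    (hf_cont : ContinuousOn f {ρ : ℝ | 0 ≤ ρ ∧ (ρ : EReal) < T})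
    (hf_pos : ∀ ρ : ℝ, 0 ≤ ρ → (ρ : EReal) < T → 0 < f ρ)
    (hu_diff : ∀ ρ : ℝ, 0 ≤ ρ → (ρ : EReal) < T → DifferentiableAt ℝ u ρ)
    (hu0 : u 0 < 0)
    (hu_deriv : ∀ ρ : ℝ, 0 ≤ ρ → (ρ : EReal) < T →
      deriv u ρ ≤ -(f ρ) ^ 2 * (u ρ) ^ 2 / ((n : ℝ) - 1)) :
    ∀ ρ : ℝ, 0 ≤ ρ → (ρ : EReal) < T →
      (u ρ ≤ u 0 ∧ u 0 < 0) ∧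
      (((n : ℝ) - 1) / u 0 + (∫ t in (0:ℝ)..ρ, (f t) ^ 2) ≤ ((n : ℝ) - 1) / u ρ ∧
        ((n : ℝ) - 1) / u ρ < 0) ∧
      (∫ t in (0:ℝ)..ρ, (f t) ^ 2) < ((n : ℝ) - 1) / (-u 0) := by
  intro ρ hρ0 hρT
  have hn1 : (0:ℝ) < (n:ℝ) - 1 := by
    have h2 : (2:ℝ) ≤ (n:ℝ) := by exact_mod_cast hn
    linarith
  have hmem : ∀ t ∈ Set.Icc (0:ℝ) ρ, 0 ≤ t ∧ (t : EReal) < T := by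
    intro t ht
    refine ⟨ht.1, lt_of_le_of_lt ?_ hρT⟩
    exact_mod_cast ht.2
  have hsub : Set.Icc (0:ℝ) ρ ⊆ {x : ℝ | 0 ≤ x ∧ (x : EReal) < T} := fun t ht => hmem t ht
  have hudiff : ∀ t ∈ Set.Icc (0:ℝ) ρ, DifferentiableAt ℝ u t := fun t ht =>
    hu_diff t (hmem t ht).1 (hmem t ht).2
  have hucont : ContinuousOn u (Set.Icc (0:ℝ) ρ) := fun t ht =>
    (hudiff t ht).continuousAt.continuousWithinAt
  have h0mem : (0:ℝ) ∈ Set.Icc (0:ℝ) ρ := Set.left_mem_Icc.mpr hρ0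
  have hρmem : ρ ∈ Set.Icc (0:ℝ) ρ := Set.right_mem_Icc.mpr hρ0
  have hanti : AntitoneOn u (Set.Icc (0:ℝ) ρ) := by
    apply antitoneOn_of_deriv_nonpos (convex_Icc 0 ρ) hucont
    · intro t ht
      rw [interior_Icc] at ht
      exact (hudiff t ⟨ht.1.le, ht.2.le⟩).differentiableWithinAt
    · intro t ht
      rw [interior_Icc] at ht
      have hm := hmem t ⟨ht.1.le, ht.2.le⟩
      have hd := hu_deriv t hm.1 hm.2
      have hnn : -(f t) ^ 2 * (u t) ^ 2 / ((n:ℝ) - 1) ≤ 0 := by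
        apply div_nonpos_of_nonpos_of_nonneg _ hn1.le
        nlinarith [sq_nonneg (f t), sq_nonneg (u t)]
      linarith
  have huneg : ∀ t ∈ Set.Icc (0:ℝ) ρ, u t < 0 := fun t ht =>
    lt_of_le_of_lt (hanti h0mem ht ht.1) hu0
  set w : ℝ → ℝ := fun t => ((n:ℝ) - 1) / u t with hw
  have hwcont : ContinuousOn w (Set.Icc (0:ℝ) ρ) :=
    continuousOn_const.div hucont (fun t ht => (huneg t ht).ne)
  have hfint : MeasureTheory.IntegrableOn (fun t => (f t) ^ 2) (Set.Icc (0:ℝ) ρ)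
      MeasureTheory.volume := ((hf_cont.mono hsub).pow 2).integrableOn_Icc
  have key : (∫ t in (0:ℝ)..ρ, (f t) ^ 2) ≤ w ρ - w 0 := by
    apply intervalIntegral.integral_le_sub_of_hasDeriv_right_of_le hρ0 ?hcont
        (g' := fun x => (0 * u x - ((n:ℝ) - 1) * deriv u x) / (u x) ^ 2)
        ?hderiv hfint ?hle
    case hcont => exact hwcont
    case hderiv =>
      intro x hx
      have hxm : x ∈ Set.Icc (0:ℝ) ρ := ⟨hx.1.le, hx.2.le⟩
      have hdu : HasDerivAt u (deriv u x) x := (hudiff x hxm).hasDerivAt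
      exact ((hasDerivAt_const x (((n:ℝ) - 1))).div hdu (huneg x hxm).ne).hasDerivWithinAt
    case hle =>
      intro x hx
      have hxm : x ∈ Set.Icc (0:ℝ) ρ := ⟨hx.1.le, hx.2.le⟩
      have hm := hmem x hxm
      have hd := hu_deriv x hm.1 hm.2
      have hune : u x ≠ 0 := (huneg x hxm).ne
      have hu2 : (0:ℝ) < (u x) ^ 2 := by positivity
      rw [le_div_iff₀ hu2]
      have hmul : deriv u x * ((n:ℝ) - 1) ≤ -(f x) ^ 2 * (u x) ^ 2 := (le_div_iff₀ hn1).mp hd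
      nlinarith
  have hwρneg : w ρ < 0 := div_neg_of_pos_of_neg hn1 (huneg ρ hρmem)
  have hrw : ((n:ℝ) - 1) / (-u 0) = -(((n:ℝ) - 1) / u 0) := by rw [div_neg]
  have key' : (∫ t in (0:ℝ)..ρ, (f t) ^ 2) ≤ ((n:ℝ) - 1) / u ρ - ((n:ℝ) - 1) / u 0 := key
  have hwρneg' : ((n:ℝ) - 1) / u ρ < 0 := hwρneg
  exact ⟨⟨hanti h0mem hρmem hρ0, hu0⟩, ⟨by linarith, hwρneg'⟩, by rw [hrw]; linarith⟩
end

section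
/- Let n ≥ 2 be an integer, let U ⊆ ℝ² be open, and let F, G : U → ℝ be twice continuously differentiable. Denote by ∂₁ the partial derivative in the first variable ρ and by ∂₂ the partial derivative in the second variable θ. Assume that at every point of U: (n−2)·∂₁∂₂G + ∂₁∂₂F − (n−1)·(∂₁G)(∂₂F) = 0 and ∂₁∂₂G − 2(∂₂F)(∂₁G) + (∂₂G)(∂₁G) = 0. Then at every point of U, ∂₁( e^{−G} ∂₂F ) = −((n−2)/2)·∂₁( e^{−G} ∂₂G ); consequently e^{−G}( ∂₂F + ((n−2)/2) ∂₂G ) is locally independent of ρ. -/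
/-!
With `ψ_F = e^{-G} ∂₂F` and `ψ_G = e^{-G} ∂₂G` one has `∂₁ψ_K = e^{-G}(∂₁∂₂K - ∂₁G ∂₂K)`, so
`∂₁ψ_F + ((n-2)/2) ∂₁ψ_G` is `e^{-G}` times the combination (first PDE) - ((n-2)/2)(second PDE),
which vanishes. A function of `ρ` with vanishing derivative on an interval is constant there.
-/

/-- Partial derivative in the first (radial) variable `ρ`. -/
noncomputable def pd1 (F : ℝ × ℝ → ℝ) (p : ℝ × ℝ) : ℝ :=
  deriv (fun x : ℝ => F (x, p.2)) p.1

/-- Partial derivative in the second (angular) variable `θ`. -/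
noncomputable def pd2 (F : ℝ × ℝ → ℝ) (p : ℝ × ℝ) : ℝ :=
  deriv (fun y : ℝ => F (p.1, y)) p.2

open Real Topology

section PartialDerivatives

variable {H K : ℝ × ℝ → ℝ} {p : ℝ × ℝ}

theorem DifferentiableAt.hasDerivAt_pd1 (hH : DifferentiableAt ℝ H p) :
    HasDerivAt (fun x : ℝ => H (x, p.2)) (pd1 H p) p.1 :=
  (hH.comp p.1 (differentiableAt_id.prodMk (differentiableAt_const p.2))).hasDerivAt

theorem DifferentiableAt.pd2_eq_fderiv (hH : DifferentiableAt ℝ H p) :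
    pd2 H p = fderiv ℝ H p (0, 1) :=
  (hH.hasFDerivAt.comp_hasDerivAt p.2 ((hasDerivAt_const p.2 p.1).prodMk
    (hasDerivAt_id p.2))).deriv

theorem ContDiffAt.differentiableAt_pd2 (hH : ContDiffAt ℝ 2 H p) :
    DifferentiableAt ℝ (pd2 H) p := by
  have hpd2 : pd2 H =ᶠ[𝓝 p] fun q => fderiv ℝ H q (0, 1) := by
    filter_upwards [hH.eventually (by simp)] with q hq
    exact (hq.differentiableAt (by norm_num)).pd2_eq_fderiv
  have hfderiv : ContDiffAt ℝ 1 (fderiv ℝ H) p := hH.fderiv_right (by norm_num)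
  exact ((hfderiv.differentiableAt (by norm_num)).clm_apply
    (differentiableAt_const _)).congr_of_eventuallyEq hpd2

theorem pd1_add_const_mul (hH : DifferentiableAt ℝ H p) (hK : DifferentiableAt ℝ K p) (c : ℝ) :
    pd1 (fun q => H q + c * K q) p = pd1 H p + c * pd1 K p :=
  (hH.hasDerivAt_pd1.add (hK.hasDerivAt_pd1.const_mul c)).deriv

theorem pd1_exp_neg_mul (hH : DifferentiableAt ℝ H p) (hK : DifferentiableAt ℝ K p) :
    pd1 (fun q => exp (-H q) * K q) p = exp (-H p) * (pd1 K p - pd1 H p * K p) :=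
  (hH.hasDerivAt_pd1.neg.exp.mul hK.hasDerivAt_pd1).deriv.trans
    (by simp only [Pi.neg_apply]; ring)

end PartialDerivatives

theorem exists_pos_forall_eq_of_pd1_eq_zero {U : Set (ℝ × ℝ)} (hU : IsOpen U) {Ψ : ℝ × ℝ → ℝ}
    (hd : ∀ q ∈ U, DifferentiableAt ℝ (fun x : ℝ => Ψ (x, q.2)) q.1)
    (h0 : ∀ q ∈ U, pd1 Ψ q = 0) {p : ℝ × ℝ} (hp : p ∈ U) :
    ∃ ε > 0, ∀ x₁ x₂ : ℝ, |x₁ - p.1| < ε → |x₂ - p.1| < ε → Ψ (x₁, p.2) = Ψ (x₂, p.2) := by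
  have hline : IsOpen ((fun x : ℝ => (x, p.2)) ⁻¹' U) := hU.preimage (by fun_prop)
  obtain ⟨ε, hε, hball⟩ := Metric.isOpen_iff.1 hline p.1 hp
  refine ⟨ε, hε, fun x₁ x₂ h₁ h₂ => ?_⟩
  exact Metric.isOpen_ball.is_const_of_deriv_eq_zero (f := fun x => Ψ (x, p.2))
    (convex_ball p.1 ε).isPreconnected
    (fun x hx => (hd (x, p.2) (hball hx)).differentiableWithinAt)
    (fun x hx => h0 (x, p.2) (hball hx)) (by simpa [Real.dist_eq] using h₁)
    (by simpa [Real.dist_eq] using h₂)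

theorem first_integral_psi_general
    (n : ℕ) (U : Set (ℝ × ℝ)) (hU : IsOpen U)
    (F G : ℝ × ℝ → ℝ)
    (hF : ContDiffOn ℝ 2 F U) (hG : ContDiffOn ℝ 2 G U)
    (h1 : ∀ p ∈ U, ((n : ℝ) - 2) * pd1 (pd2 G) p + pd1 (pd2 F) p
      - ((n : ℝ) - 1) * (pd1 G p * pd2 F p) = 0)
    (h2 : ∀ p ∈ U, pd1 (pd2 G) p - 2 * (pd2 F p * pd1 G p)
      + pd2 G p * pd1 G p = 0) :
    (∀ p ∈ U,
      pd1 (fun q => Real.exp (-G q) * pd2 F q) p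
        = -(((n : ℝ) - 2) / 2) * pd1 (fun q => Real.exp (-G q) * pd2 G q) p) ∧
    (∀ p ∈ U, ∃ ε > 0, ∀ x₁ x₂ : ℝ, |x₁ - p.1| < ε → |x₂ - p.1| < ε →
      (x₁, p.2) ∈ U → (x₂, p.2) ∈ U →
      Real.exp (-G (x₁, p.2)) *
          (pd2 F (x₁, p.2) + ((n : ℝ) - 2) / 2 * pd2 G (x₁, p.2))
        = Real.exp (-G (x₂, p.2)) *
          (pd2 F (x₂, p.2) + ((n : ℝ) - 2) / 2 * pd2 G (x₂, p.2))) := by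
  set c : ℝ := ((n : ℝ) - 2) / 2
  have hC2 {H : ℝ × ℝ → ℝ} (hH : ContDiffOn ℝ 2 H U) {q} (hq : q ∈ U) : ContDiffAt ℝ 2 H q :=
    hH.contDiffAt (hU.mem_nhds hq)
  have hG' {q} (hq : q ∈ U) := (hC2 hG hq).differentiableAt (by norm_num)
  have hF₂ {q} (hq : q ∈ U) := (hC2 hF hq).differentiableAt_pd2
  have hG₂ {q} (hq : q ∈ U) := (hC2 hG hq).differentiableAt_pd2
  refine ⟨fun p hp => ?_, fun p hp => ?_⟩
  · rw [pd1_exp_neg_mul (hG' hp) (hF₂ hp), pd1_exp_neg_mul (hG' hp) (hG₂ hp)]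
    linear_combination exp (-G p) * h1 p hp - c * exp (-G p) * h2 p hp
  · have hψ {q} (hq : q ∈ U) :
        DifferentiableAt ℝ (fun q => exp (-G q) * (pd2 F q + c * pd2 G q)) q := by
      have := hG' hq; have := hF₂ hq; have := hG₂ hq
      fun_prop
    have hψ₁ : ∀ q ∈ U, pd1 (fun q => exp (-G q) * (pd2 F q + c * pd2 G q)) q = 0 := by
      intro q hq
      have hK : DifferentiableAt ℝ (fun q => pd2 F q + c * pd2 G q) q :=
        (hF₂ hq).add ((hG₂ hq).const_mul c)
      rw [pd1_exp_neg_mul (hG' hq) hK, pd1_add_const_mul (hF₂ hq) (hG₂ hq)]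
      linear_combination exp (-G q) * h1 q hq - c * exp (-G q) * h2 q hq
    obtain ⟨ε, hε, hconst⟩ := exists_pos_forall_eq_of_pd1_eq_zero hU
      (fun q hq => (hψ hq).hasDerivAt_pd1.differentiableAt) hψ₁ hp
    exact ⟨ε, hε, fun x₁ x₂ h₁ h₂ _ _ => hconst x₁ x₂ h₁ h₂⟩

/-- The second first-integral (equation (2.35)) in the rigidity analysis of
the substatic Bishop–Gromov theorem: the two PDEs for `F = log f`,
`G = log η` imply `∂₁(e^{-G} ∂₂F) = -((n-2)/2) ∂₁(e^{-G} ∂₂G)`, so that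
`e^{-G}(∂₂F + ((n-2)/2) ∂₂G)` is locally independent of `ρ`. -/
theorem first_integral_psi
    (n : ℕ) (hn : 2 ≤ n) (U : Set (ℝ × ℝ)) (hU : IsOpen U)
    (F G : ℝ × ℝ → ℝ)
    (hF : ContDiffOn ℝ 2 F U) (hG : ContDiffOn ℝ 2 G U)
    (h1 : ∀ p ∈ U, ((n : ℝ) - 2) * pd1 (pd2 G) p + pd1 (pd2 F) p
      - ((n : ℝ) - 1) * (pd1 G p * pd2 F p) = 0)
    (h2 : ∀ p ∈ U, pd1 (pd2 G) p - 2 * (pd2 F p * pd1 G p)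
      + pd2 G p * pd1 G p = 0) :
    (∀ p ∈ U,
      pd1 (fun q => Real.exp (-G q) * pd2 F q) p
        = -(((n : ℝ) - 2) / 2) * pd1 (fun q => Real.exp (-G q) * pd2 G q) p) ∧
    (∀ p ∈ U, ∃ ε > 0, ∀ x₁ x₂ : ℝ, |x₁ - p.1| < ε → |x₂ - p.1| < ε →
      (x₁, p.2) ∈ U → (x₂, p.2) ∈ U →
      Real.exp (-G (x₁, p.2)) *
          (pd2 F (x₁, p.2) + ((n : ℝ) - 2) / 2 * pd2 G (x₁, p.2))
        = Real.exp (-G (x₂, p.2)) *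
          (pd2 F (x₂, p.2) + ((n : ℝ) - 2) / 2 * pd2 G (x₂, p.2))) :=
  first_integral_psi_general n U hU F G hF hG h1 h2
end
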